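/- Let C be a well-powered category with wide pullbacks and let F : C ⥤ C preserve monomorphisms and intersections. Let c : C ⟶ F.obj C be an F-coalgebra and m a subobject of C with underlying object S. Then S carries a subcoalgebra structure (i.e., there exists s : S ⟶ F.obj S with m.arrow ≫ c = s ≫ F.map m.arrow) if and only if m is a prefixed point of the previous-time operator, i.e., ⬗_c m ≤ m in Subobject C. -/

import Mathlib

open CategoryTheory CategoryTheory.Limits

universe w v u

variable {C : Type u} [Category.{v} C]

/-- A functor preserves monomorphisms. -/
def PreservesMonos (F : C ⥤ C) : Prop :=
  ∀ ⦃X Y : C⦄ (f : X ⟶ Y), Mono f → Mono (F.map f)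

/-- The induced map on subobject lattices of a mono-preserving functor. -/
noncomputable def subMap {F : C ⥤ C} (hF : PreservesMonos F) {Y : C} (m : Subobject Y) :
    Subobject (F.obj Y) :=
  letI : Mono (F.map m.arrow) := hF m.arrow inferInstance
  Subobject.mk (F.map m.arrow)

/-- A mono-preserving functor preserves intersections if the induced maps on subobject
lattices preserve arbitrary infima. -/
def PreservesIntersections [WellPowered.{v} C] [HasWidePullbacks.{v} C] {F : C ⥤ C}
    (hF : PreservesMonos F) : Prop :=
  ∀ ⦃Y : C⦄ (s : Set (Subobject Y)), subMap hF (sInf s) = sInf (subMap hF '' s)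

/-- The "next time" operator of a morphism `f : X ⟶ F.obj Y`. -/
noncomputable def nextTime [HasPullbacks C] {F : C ⥤ C} (hF : PreservesMonos F)
    {X Y : C} (f : X ⟶ F.obj Y) (n : Subobject Y) : Subobject X :=
  (Subobject.pullback f).obj (subMap hF n)

/-- The "previous time" operator of a morphism `f : X ⟶ F.obj Y`: it sends a subobject `m` of
`X` to the least subobject `n` of `Y` such that `m.arrow ≫ f` factors through `F.map n.arrow`. -/
noncomputable def prevTime [WellPowered.{v} C] [HasWidePullbacks.{v} C] (F : C ⥤ C)
    {X Y : C} (f : X ⟶ F.obj Y) (m : Subobject X) : Subobject Y :=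
  sInf {n : Subobject Y | ∃ g : (m : C) ⟶ F.obj (n : C), g ≫ F.map n.arrow = m.arrow ≫ f}

/-- An `I`-pointed coalgebra `(X, c, i)` is reachable if every monomorphic homomorphism of
`I`-pointed coalgebras into it is an isomorphism. -/
def Reachable (F : C ⥤ C) {I X : C} (c : X ⟶ F.obj X) (i : I ⟶ X) : Prop :=
  ∀ ⦃S : C⦄ (s : S ⟶ F.obj S) (iS : I ⟶ S) (m : S ⟶ X),
    Mono m → s ≫ F.map m = m ≫ c → iS ≫ m = i → IsIso m

/-!
Since `F` preserves intersections, the set of subobjects `n` of `Y` through whose image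
`F.map n.arrow` the morphism `m.arrow ≫ f` factors is closed under infima; hence its infimum
`⬗_f m` is its least element. For `f = c` and `n = m`, membership of `m` in that set is exactly
a subcoalgebra structure on `m`.
-/

namespace CategoryTheory.Subobject

theorem factors_sInf_iff [WellPowered.{v} C] [HasWidePullbacks.{v} C] {A B : C}
    (s : Set (Subobject A)) (f : B ⟶ A) : (InfSet.sInf s).Factors f ↔ ∀ P ∈ s, P.Factors f := by
  -- pins the universe of the `CompleteSemilatticeInf` instance on `Subobject A` to `v`
  have : LocallySmall.{v} C := inferInstance
  refine ⟨fun h P hP => factors_of_le f (_root_.sInf_le hP) h, fun h => ?_⟩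
  change (Subobject.sInf.{v} s).Factors f
  rw [Subobject.sInf, mk_factors_iff]
  let cone : Cone (wideCospan.{v} s) :=
    WidePullbackShape.mkCone f
      (fun j => ((equivShrink (Subobject A)).symm j).factorThru f
        (h _ (by rcases j with ⟨-, P, hP, rfl⟩; simpa using hP)))
      (fun _ => factorThru_arrow _ _ _)
  exact ⟨limit.lift _ cone, limit.lift_π cone none⟩

end CategoryTheory.Subobject

theorem subMap_factors_iff {F : C ⥤ C} (hF : PreservesMonos F) {Y Z : C} (n : Subobject Y)
    (g : Z ⟶ F.obj Y) :
    (subMap hF n).Factors g ↔ ∃ h : Z ⟶ F.obj (n : C), h ≫ F.map n.arrow = g := by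
  have : Mono (F.map n.arrow) := hF n.arrow inferInstance
  exact Subobject.mk_factors_iff _ _

theorem prevTime_le_iff [WellPowered.{v} C] [HasWidePullbacks.{v} C] {F : C ⥤ C}
    {hF : PreservesMonos F} (hInt : PreservesIntersections hF) {X Y : C} (f : X ⟶ F.obj Y)
    (m : Subobject X) (n : Subobject Y) :
    prevTime F f m ≤ n ↔ ∃ g : (m : C) ⟶ F.obj (n : C), g ≫ F.map n.arrow = m.arrow ≫ f := by
  have : LocallySmall.{v} C := inferInstance
  refine ⟨fun hle => ?_, fun hn => sInf_le hn⟩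
  have hprev : (subMap hF (prevTime F f m)).Factors (m.arrow ≫ f) := by
    rw [prevTime, hInt, Subobject.factors_sInf_iff]
    rintro _ ⟨P, hP, rfl⟩
    exact (subMap_factors_iff hF P _).2 hP
  obtain ⟨g, hg⟩ := (subMap_factors_iff hF _ _).1 hprev
  refine ⟨g ≫ F.map (Subobject.ofLE _ _ hle), ?_⟩
  rw [Category.assoc, ← F.map_comp, Subobject.ofLE_arrow, hg]

/-- For an intersection-preserving functor `F` and an `F`-coalgebra `c : X ⟶ F.obj X`, a
subobject `m` of `X` carries a subcoalgebra structure iff `m` is a prefixed point of the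
"previous time" operator `⬗_c`. -/
theorem subcoalgebra_iff_prevTime_le
    [WellPowered.{v} C] [HasWidePullbacks.{v} C]
    (F : C ⥤ C) (hF : PreservesMonos F) (hInt : PreservesIntersections hF)
    {X : C} (c : X ⟶ F.obj X) (m : Subobject X) :
    (∃ s : (m : C) ⟶ F.obj (m : C), m.arrow ≫ c = s ≫ F.map m.arrow) ↔
      prevTime F c m ≤ m := by
  rw [prevTime_le_iff hInt]
  exact exists_congr fun _ => eq_comm
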